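/- Let β ≥ 2. There exists a constant C > 0 (depending only on β) such that for all q, q̃, r ∈ ℝ² and all η > 0: |(∇G(q̃) − ∇G(q))·r| ≤ max(|p(q)|^{β−2}, |p(q̃)|^{β−2}) · ( (C/η) |p(q)−p(q̃)|² + η |r|² ), where |·| is the Euclidean norm on ℝ² and · the Euclidean inner product. -/

import Mathlib

/-! With `γ = β - 2`, the gradient is `∇G(q) = β |v|^γ v` for `v = (-q₁⁻, q₂⁺)`, and `|v| = |p(q)|`.
The map `v ↦ |v|^γ v` is Lipschitz with constant `(γ + 2) max(|u|, |v|)^γ` between `u` and `v`: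
writing `|u|^γ u - |v|^γ v = |u|^γ (u - v) - (|v|^γ - |u|^γ) v` for `|u| ≤ |v|`, the second term is
controlled by the Bernoulli-type bound `(s^γ - t^γ) s ≤ (γ + 1) s^γ (s - t)` for `0 ≤ t ≤ s`.
Cauchy–Schwarz and Young's inequality then give the estimate with `C = β⁴ / 4`. -/

/-- `p(q) = (q₁⁻, q₂⁺)` where `t⁻ = max(-t,0)` and `t⁺ = max(t,0)`. -/
noncomputable def pmap (q : ℝ × ℝ) : ℝ × ℝ := (max (-q.1) 0, max q.2 0)

/-- Euclidean norm on `ℝ²`. -/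
noncomputable def eucEnorm (p : ℝ × ℝ) : ℝ := Real.sqrt (p.1 ^ 2 + p.2 ^ 2)

/-- `G(q₁,q₂) = ((q₁⁻)² + (q₂⁺)²)^{β/2}`. -/
noncomputable def Gfun (β : ℝ) (q : ℝ × ℝ) : ℝ :=
  ((pmap q).1 ^ 2 + (pmap q).2 ^ 2) ^ (β / 2)

/-- The gradient `∇G(q) = β |p(q)|^{β-2} (-q₁⁻, q₂⁺)`. -/
noncomputable def gradG (β : ℝ) (q : ℝ × ℝ) : ℝ × ℝ :=
  (β * eucEnorm (pmap q) ^ (β - 2) * (-(pmap q).1),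
   β * eucEnorm (pmap q) ^ (β - 2) * (pmap q).2)

open Real

lemma one_sub_rpow_le_mul_one_sub {γ x : ℝ} (hγ : 0 ≤ γ) (hx₀ : 0 ≤ x) (hx₁ : x ≤ 1) :
    1 - x ^ γ ≤ (γ + 1) * (1 - x) := by
  rcases le_total γ 1 with hγ₁ | hγ₁
  · have : x ≤ x ^ γ := by
      simpa using rpow_le_rpow_of_exponent_ge' hx₀ hx₁ hγ hγ₁
    nlinarith
  · have := one_add_mul_self_le_rpow_one_add (show -1 ≤ x - 1 by linarith) hγ₁
    rw [add_sub_cancel] at this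
    nlinarith

lemma rpow_sub_rpow_mul_le {γ s t : ℝ} (hγ : 0 ≤ γ) (ht : 0 ≤ t) (hts : t ≤ s) :
    (s ^ γ - t ^ γ) * s ≤ (γ + 1) * s ^ γ * (s - t) := by
  obtain rfl | hs := (ht.trans hts).eq_or_lt
  · simp [le_antisymm hts ht]
  have hinner := one_sub_rpow_le_mul_one_sub hγ (div_nonneg ht hs.le) ((div_le_one hs).2 hts)
  have ht_eq : t = t / s * s := (div_mul_cancel₀ t hs.ne').symm
  have hpow : t ^ γ = (t / s) ^ γ * s ^ γ := by
    rw [← mul_rpow (div_nonneg ht hs.le) hs.le, ← ht_eq]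
  calc (s ^ γ - t ^ γ) * s = s ^ γ * s * (1 - (t / s) ^ γ) := by rw [hpow]; ring
    _ ≤ s ^ γ * s * ((γ + 1) * (1 - t / s)) := by gcongr
    _ = (γ + 1) * s ^ γ * (s - t) := by field_simp

section NormedSpace

variable {E : Type*} [NormedAddCommGroup E] [NormedSpace ℝ E] {γ : ℝ}

lemma norm_rpow_smul_sub_rpow_smul_le (hγ : 0 ≤ γ) {u v : E} (huv : ‖u‖ ≤ ‖v‖) :
    ‖‖u‖ ^ γ • u - ‖v‖ ^ γ • v‖ ≤ (γ + 2) * ‖v‖ ^ γ * ‖u - v‖ := by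
  have hmono : ‖u‖ ^ γ ≤ ‖v‖ ^ γ := rpow_le_rpow (norm_nonneg u) huv hγ
  have hscalar := rpow_sub_rpow_mul_le hγ (norm_nonneg u) huv
  have hrev : ‖v‖ - ‖u‖ ≤ ‖u - v‖ := by simpa [norm_sub_rev] using norm_sub_norm_le v u
  calc ‖‖u‖ ^ γ • u - ‖v‖ ^ γ • v‖ = ‖‖u‖ ^ γ • (u - v) - (‖v‖ ^ γ - ‖u‖ ^ γ) • v‖ := by
        congr 1; module
    _ ≤ ‖u‖ ^ γ * ‖u - v‖ + (‖v‖ ^ γ - ‖u‖ ^ γ) * ‖v‖ := by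
        refine (norm_sub_le _ _).trans_eq ?_
        rw [norm_smul, norm_smul, Real.norm_of_nonneg (by positivity),
          Real.norm_of_nonneg (sub_nonneg.2 hmono)]
    _ ≤ ‖v‖ ^ γ * ‖u - v‖ + (γ + 1) * ‖v‖ ^ γ * ‖u - v‖ :=
        add_le_add (by gcongr) (hscalar.trans (mul_le_mul_of_nonneg_left hrev (by positivity)))
    _ = (γ + 2) * ‖v‖ ^ γ * ‖u - v‖ := by ring

lemma norm_rpow_smul_sub_rpow_smul_le_max (hγ : 0 ≤ γ) (u v : E) :
    ‖‖u‖ ^ γ • u - ‖v‖ ^ γ • v‖ ≤ (γ + 2) * max (‖u‖ ^ γ) (‖v‖ ^ γ) * ‖u - v‖ := by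
  rcases le_total ‖u‖ ‖v‖ with huv | hvu
  · exact (norm_rpow_smul_sub_rpow_smul_le hγ huv).trans (by gcongr; exact le_max_right _ _)
  · rw [norm_sub_rev, norm_sub_rev u]
    exact (norm_rpow_smul_sub_rpow_smul_le hγ hvu).trans (by gcongr; exact le_max_left _ _)

end NormedSpace

lemma mul_le_sq_div_add_mul_sq {η : ℝ} (hη : 0 < η) (a b : ℝ) :
    a * b ≤ a ^ 2 / (4 * η) + η * b ^ 2 := by
  have := two_mul_le_add_mul_sq (a := a) (b := b) (inv_pos.2 (mul_pos two_pos hη))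
  field_simp at this ⊢
  linarith

lemma abs_inner_rpow_smul_sub_rpow_smul_le {E : Type*} [NormedAddCommGroup E]
    [InnerProductSpace ℝ E] {γ η : ℝ} (hγ : 0 ≤ γ) (hη : 0 < η) (u v r : E) :
    |inner ℝ (‖v‖ ^ γ • v - ‖u‖ ^ γ • u) r| ≤
      max (‖u‖ ^ γ) (‖v‖ ^ γ) * ((γ + 2) ^ 2 / (4 * η) * ‖u - v‖ ^ 2 + η * ‖r‖ ^ 2) := by
  have hmax : 0 ≤ max (‖u‖ ^ γ) (‖v‖ ^ γ) := le_max_of_le_left (by positivity)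
  calc |inner ℝ (‖v‖ ^ γ • v - ‖u‖ ^ γ • u) r| ≤ ‖‖v‖ ^ γ • v - ‖u‖ ^ γ • u‖ * ‖r‖ :=
        abs_real_inner_le_norm _ _
    _ ≤ (γ + 2) * max (‖u‖ ^ γ) (‖v‖ ^ γ) * ‖u - v‖ * ‖r‖ := by
        rw [norm_sub_rev]
        gcongr
        exact norm_rpow_smul_sub_rpow_smul_le_max hγ u v
    _ = max (‖u‖ ^ γ) (‖v‖ ^ γ) * (((γ + 2) * ‖u - v‖) * ‖r‖) := by ring
    _ ≤ max (‖u‖ ^ γ) (‖v‖ ^ γ) * ((γ + 2) ^ 2 / (4 * η) * ‖u - v‖ ^ 2 + η * ‖r‖ ^ 2) := by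
        gcongr
        exact (mul_le_sq_div_add_mul_sq hη _ _).trans_eq (by ring)

noncomputable def gradDir (q : ℝ × ℝ) : EuclideanSpace ℝ (Fin 2) := !₂[-(pmap q).1, (pmap q).2]

lemma eucEnorm_pmap_eq_norm_gradDir (q : ℝ × ℝ) : eucEnorm (pmap q) = ‖gradDir q‖ := by
  simp [eucEnorm, gradDir, EuclideanSpace.norm_eq, Fin.sum_univ_two]

lemma sq_dist_pmap_eq_norm_gradDir_sub_sq (q qt : ℝ × ℝ) :
    ((pmap q).1 - (pmap qt).1) ^ 2 + ((pmap q).2 - (pmap qt).2) ^ 2 =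
      ‖gradDir q - gradDir qt‖ ^ 2 := by
  simp only [gradDir, EuclideanSpace.real_norm_sq_eq, PiLp.sub_apply, Fin.sum_univ_two,
    Matrix.cons_val_zero, Matrix.cons_val_one, Matrix.cons_val_fin_one]
  ring

lemma gradG_sub_dot_eq (β : ℝ) (q qt r : ℝ × ℝ) :
    ((gradG β qt).1 - (gradG β q).1) * r.1 + ((gradG β qt).2 - (gradG β q).2) * r.2 =
      β * inner ℝ (‖gradDir qt‖ ^ (β - 2) • gradDir qt - ‖gradDir q‖ ^ (β - 2) • gradDir q)
        !₂[r.1, r.2] := by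
  simp only [gradG, eucEnorm_pmap_eq_norm_gradDir, gradDir, PiLp.inner_apply, PiLp.sub_apply,
    PiLp.smul_apply, smul_eq_mul, RCLike.inner_apply, conj_trivial, Fin.sum_univ_two,
    Matrix.cons_val_zero, Matrix.cons_val_one, Matrix.cons_val_fin_one]
  ring

/-- Young-type estimate for `|(∇G(q̃) - ∇G(q))·r|`. -/
theorem stmt_13 (β : ℝ) (hβ : 2 ≤ β) :
    ∃ C : ℝ, 0 < C ∧ ∀ (q qt r : ℝ × ℝ) (η : ℝ), 0 < η →
      |((gradG β qt).1 - (gradG β q).1) * r.1 +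
          ((gradG β qt).2 - (gradG β q).2) * r.2| ≤
        max (eucEnorm (pmap q) ^ (β - 2)) (eucEnorm (pmap qt) ^ (β - 2)) *
          ((C / η) *
              (((pmap q).1 - (pmap qt).1) ^ 2 + ((pmap q).2 - (pmap qt).2) ^ 2) +
            η * (r.1 ^ 2 + r.2 ^ 2)) := by
  have hβ₀ : 0 < β := by linarith
  refine ⟨β ^ 4 / 4, by positivity, fun q qt r η hη => ?_⟩
  have hr : r.1 ^ 2 + r.2 ^ 2 = ‖(!₂[r.1, r.2] : EuclideanSpace ℝ (Fin 2))‖ ^ 2 := by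
    simp [EuclideanSpace.real_norm_sq_eq, Fin.sum_univ_two]
  -- Young's inequality is applied with weight `η / β` to absorb the factor `β` of the gradient.
  have hinner := abs_inner_rpow_smul_sub_rpow_smul_le (sub_nonneg.2 hβ) (div_pos hη hβ₀)
    (gradDir q) (gradDir qt) !₂[r.1, r.2]
  rw [gradG_sub_dot_eq, abs_mul, abs_of_pos hβ₀, eucEnorm_pmap_eq_norm_gradDir,
    eucEnorm_pmap_eq_norm_gradDir, sq_dist_pmap_eq_norm_gradDir_sub_sq, hr]
  calc β * |inner ℝ _ _| ≤ β * (max (‖gradDir q‖ ^ (β - 2)) (‖gradDir qt‖ ^ (β - 2)) *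
        ((β - 2 + 2) ^ 2 / (4 * (η / β)) * ‖gradDir q - gradDir qt‖ ^ 2 +
          η / β * ‖(!₂[r.1, r.2] : EuclideanSpace ℝ (Fin 2))‖ ^ 2)) :=
        mul_le_mul_of_nonneg_left hinner hβ₀.le
    _ = _ := by field_simp; ring
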